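/- For all integers k ≥ 2, h ≥ 0, 1 ≤ b ≤ k−1, and n ≥ 0, the n-th potential of the almost complete k-ary tree satisfies Φ_R(ACT(b, k, h), n) = ∑_{i=1}^{n} (k−1)^i · C(h, i) + (b−1) · ∑_{i=0}^{n−1} (k−1)^i · C(h, i). -/

import Mathlib

/-- A rooted tree: a root with a finite ordered list of children. -/
inductive RTree : Type
  | node : List RTree → RTree

/-- A rooted computation tree: no node has exactly one child. -/
inductive RTree.Valid : RTree → Prop
  | mk (cs : List RTree) (hlen : cs.length ≠ 1) (hc : ∀ c ∈ cs, RTree.Valid c) :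
      RTree.Valid (RTree.node cs)

/-- A steal step on a multiset of rooted computation trees: choose an arbitrary tree `U`
and a tree whose root has children `cs ++ [c]` (at least two children); the stolen subtree
is the last child `c`, and the remainder is the root with the other children if there were
more than two, or the single other child if there were exactly two. -/
def RStealStep (S S' : Multiset RTree) : Prop :=
  ∃ (U c : RTree) (cs : List RTree) (S₀ : Multiset RTree),
    S = U ::ₘ RTree.node (cs ++ [c]) ::ₘ S₀ ∧
      ((∃ a, cs = [a] ∧ S' = a ::ₘ c ::ₘ S₀) ∨
        (2 ≤ cs.length ∧ S' = RTree.node cs ::ₘ c ::ₘ S₀))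

/-- `RStealSeq n S` means there exists a sequence of `n` steal steps starting from `S`. -/
def RStealSeq : ℕ → Multiset RTree → Prop
  | 0, _ => True
  | n + 1, S => ∃ S', RStealStep S S' ∧ RStealSeq n S'

/-- The maximum length of a sequence of steal steps starting from `S`. -/
noncomputable def stealsR (S : Multiset RTree) : ℕ :=
  sSup {n | RStealSeq n S}

/-- The `n`-th potential of a rooted computation tree `T`. -/
noncomputable def PhiR (T : RTree) (n : ℕ) : ℕ :=
  stealsR (T ::ₘ Multiset.replicate n (RTree.node []))

/-- The complete `k`-ary tree of height `h`. -/
def CKT (k : ℕ) : ℕ → RTree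
  | 0 => RTree.node []
  | h + 1 => RTree.node (List.replicate k (CKT k h))

/-- The almost complete `k`-ary tree with `b · k^h` leaves: the complete `k`-ary tree
of height `h` if `b = 1`, and a root with `b` children each equal to `CKT k h` if `b ≥ 2`. -/
def ACT (b k h : ℕ) : RTree :=
  if b = 1 then CKT k h else RTree.node (List.replicate b (CKT k h))

/-!
Encode `ACT (r + 1) k h` (`r < k - 1`) by the key `K = (k - 1) * h + r`, the single node being
key `0`, and put `keyPot K t = ∑_{1 ≤ i ≤ t} (k-1)^i C(h,i) + r ∑_{i < t} (k-1)^i C(h,i)`.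
The potential of a multiset of such trees is `∑_i keyPot K_i i` for its keys listed increasingly
`K_0 ≤ K_1 ≤ ⋯`. Since `keyPot` is supermodular in key and budget, the increasing order
maximizes this sum over all orderings (rearrangement inequality). A steal replaces a key `K` by
`K - 1` and a stolen key `B ≤ K - 1`, and `keyPot B t + keyPot (K - 1) (t + 1) + 1 =
keyPot K (t + 1)`; with the rearrangement inequality this shows that every steal lowers the
potential by at least one, while the greedy steal (the smallest tree steals from the smallest
non-leaf among the others) lowers it by exactly one. So `stealsR` equals the potential, which for
`ACT b k h` and `n` leaves is `keyPot ((k - 1) * h + b - 1) n`.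
-/

namespace ActPotential

section Arithmetic

open Finset

variable {d : ℕ}

def ckPot (d h t : ℕ) : ℕ := ∑ i ∈ Icc 1 t, d ^ i * h.choose i

def ckGain (d h t : ℕ) : ℕ := ∑ i ∈ range t, d ^ i * h.choose i

/-- `ckPot d h t = Φ_R(CKT (d + 1) h, t)` and `actPot d h r t = Φ_R(ACT (r + 1) (d + 1) h, t)`. -/
def actPot (d h r t : ℕ) : ℕ := ckPot d h t + r * ckGain d h t

lemma ckPot_succ (h t : ℕ) : ckPot d h (t + 1) = ckPot d h t + d ^ (t + 1) * h.choose (t + 1) :=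
  sum_Icc_succ_top (Nat.le_add_left 1 t) _

lemma ckGain_succ (h t : ℕ) : ckGain d h (t + 1) = ckGain d h t + d ^ t * h.choose t :=
  sum_range_succ _ _

lemma ckGain_succ_eq_ckPot_add_one (h t : ℕ) : ckGain d h (t + 1) = ckPot d h t + 1 := by
  induction t with
  | zero => simp [ckGain, ckPot]
  | succ t ih => rw [ckGain_succ, ih, ckPot_succ]; ring

lemma ckPot_succ_height (h t : ℕ) : ckPot d (h + 1) t = ckPot d h t + d * ckGain d h t := by
  induction t with
  | zero => simp [ckPot, ckGain]
  | succ t ih => rw [ckPot_succ, ckPot_succ, ckGain_succ, ih, Nat.choose_succ_succ]; ring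

lemma ckPot_zero_height (t : ℕ) : ckPot d 0 t = 0 :=
  sum_eq_zero fun i hi => by simp [Nat.choose_eq_zero_of_lt (mem_Icc.mp hi).1]

lemma ckPot_mono (h : ℕ) : Monotone (ckPot d h) := fun _ _ htt =>
  sum_le_sum_of_subset (Icc_subset_Icc_right htt)

lemma ckGain_mono (h : ℕ) : Monotone (ckGain d h) := fun _ _ htt =>
  sum_le_sum_of_subset (range_subset_range.mpr htt)

lemma actPot_mono (h r : ℕ) : Monotone (actPot d h r) := fun _ _ htt =>
  add_le_add (ckPot_mono h htt) (Nat.mul_le_mul_left r (ckGain_mono h htt))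

lemma actPot_exchange (h r t : ℕ) :
    actPot d h r (t + 1) + actPot d h (r + 1) t ≤
      actPot d h r t + actPot d h (r + 1) (t + 1) := by
  have := ckGain_mono (d := d) h (Nat.le_add_right t 1)
  simp only [actPot, add_mul, one_mul]
  omega

def keyPot (d K t : ℕ) : ℕ := actPot d (K / d) (K % d) t

lemma keyPot_eq (hd : 0 < d) {h r : ℕ} (hr : r ≤ d) (t : ℕ) :
    keyPot d (d * h + r) t = actPot d h r t := by
  rcases hr.lt_or_eq with hr | rfl
  · rw [keyPot, Nat.mul_add_div hd, Nat.div_eq_of_lt hr, Nat.mul_add_mod, Nat.mod_eq_of_lt hr,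
      add_zero]
  · rw [keyPot, ← Nat.mul_succ, Nat.mul_div_cancel_left _ hd, Nat.mul_mod_right, actPot, actPot,
      ckPot_succ_height, zero_mul, add_zero]

lemma keyPot_zero_key (t : ℕ) : keyPot d 0 t = 0 := by
  simp [keyPot, actPot, ckPot_zero_height]

lemma keyPot_zero_budget (K : ℕ) : keyPot d K 0 = 0 := by
  simp [keyPot, actPot, ckPot, ckGain]

lemma keyPot_mono (K : ℕ) : Monotone (keyPot d K) := actPot_mono _ _

lemma keyPot_exchange_succ (hd : 0 < d) (K t : ℕ) :
    keyPot d K (t + 1) + keyPot d (K + 1) t ≤ keyPot d K t + keyPot d (K + 1) (t + 1) := by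
  obtain ⟨h, r, hr, rfl⟩ : ∃ h r, r < d ∧ K = d * h + r :=
    ⟨K / d, K % d, Nat.mod_lt K hd, (Nat.div_add_mod K d).symm⟩
  rw [add_assoc, keyPot_eq hd hr.le, keyPot_eq hd hr.le, keyPot_eq hd hr, keyPot_eq hd hr]
  exact actPot_exchange h r t

lemma keyPot_exchange (hd : 0 < d) {x y : ℕ} (hxy : x ≤ y) (t : ℕ) :
    keyPot d x (t + 1) + keyPot d y t ≤ keyPot d x t + keyPot d y (t + 1) := by
  induction y, hxy using Nat.le_induction with
  | base => omega
  | succ y _ ih => have := keyPot_exchange_succ hd y t; omega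

def stolenKey (d K : ℕ) : ℕ := d * ((K - 1) / d)

lemma stolenKey_le (d K : ℕ) : stolenKey d K ≤ K - 1 := Nat.mul_div_le _ _

lemma keyPot_steal (hd : 0 < d) {K : ℕ} (hK : 1 ≤ K) (t : ℕ) :
    keyPot d (stolenKey d K) t + keyPot d (K - 1) (t + 1) + 1 = keyPot d K (t + 1) := by
  obtain ⟨h, m, hm, hKm⟩ : ∃ h m, m < d ∧ K - 1 = d * h + m :=
    ⟨(K - 1) / d, (K - 1) % d, Nat.mod_lt _ hd, (Nat.div_add_mod _ d).symm⟩
  have hK' : K = d * h + (m + 1) := by omega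
  have hstolen : stolenKey d K = d * h + 0 := by
    rw [stolenKey, hKm, Nat.mul_add_div hd, Nat.div_eq_of_lt hm, add_zero, add_zero]
  rw [hstolen, hKm, keyPot_eq hd hd.le, keyPot_eq hd hm.le, hK',
    keyPot_eq hd (by omega : m + 1 ≤ d)]
  simp only [actPot, ckGain_succ_eq_ckPot_add_one]
  ring

end Arithmetic

open List

lemma coe_append_cons {α : Type*} (l₁ l₂ : List α) (x : α) :
    ((l₁ ++ x :: l₂ : List α) : Multiset α) = x ::ₘ (l₁ ++ l₂ : List α) :=
  Multiset.coe_eq_coe.mpr perm_middle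

lemma exists_split_of_pairwise {α : Type*} [LinearOrder α] {s : List α}
    (hs : s.Pairwise (· ≤ ·)) {a b : α} (hba : b ≤ a) {S : Multiset α}
    (hsS : (s : Multiset α) = a ::ₘ b ::ₘ S) :
    ∃ p q r, s = p ++ b :: (q ++ a :: r) ∧ S = ((p ++ q ++ r : List α) : Multiset α) := by
  obtain ⟨p, s', rfl⟩ := append_of_mem (show b ∈ s by simp [← Multiset.mem_coe, hsS])
  rw [coe_append_cons, Multiset.cons_swap, Multiset.cons_inj_right] at hsS
  rcases mem_append.mp (show a ∈ p ++ s' by simp [← Multiset.mem_coe, hsS]) with ha | ha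
  · obtain ⟨p₁, p₂, rfl⟩ := append_of_mem ha
    have hab : a ≤ b := pairwise_append.mp hs |>.2.2 a (by simp) b (by simp)
    obtain rfl := le_antisymm hab hba
    rw [append_assoc, cons_append, coe_append_cons, Multiset.cons_inj_right] at hsS
    exact ⟨p₁, p₂, s', by simp, by simp [hsS]⟩
  · obtain ⟨q, r, rfl⟩ := append_of_mem ha
    rw [← append_assoc, coe_append_cons, Multiset.cons_inj_right] at hsS
    exact ⟨p, q, r, rfl, hsS.symm⟩

lemma exists_eq_replicate_append {α : Type*} (a : α) (t : List α) :
    ∃ z r, t = replicate z a ++ r ∧ ∀ x ∈ r.head?, x ≠ a := by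
  induction t with
  | nil => exact ⟨0, [], rfl, by simp⟩
  | cons x t ih =>
    by_cases hx : x = a
    · obtain ⟨z, r, rfl, hr⟩ := ih
      exact ⟨z + 1, r, by simp [hx, replicate_succ], hr⟩
    · exact ⟨0, x :: t, rfl, by simpa using hx⟩

section Lists

variable {d : ℕ}

def listPot (d : ℕ) : ℕ → List ℕ → ℕ
  | _, [] => 0
  | b, x :: l => keyPot d x b + listPot d (b + 1) l

@[simp] lemma listPot_nil (b : ℕ) : listPot d b [] = 0 := rfl

@[simp] lemma listPot_cons (b x : ℕ) (l : List ℕ) :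
    listPot d b (x :: l) = keyPot d x b + listPot d (b + 1) l := rfl

lemma listPot_append (b : ℕ) (l l' : List ℕ) :
    listPot d b (l ++ l') = listPot d b l + listPot d (b + l.length) l' := by
  induction l generalizing b with
  | nil => simp
  | cons x l ih => simp only [cons_append, listPot_cons, ih, length_cons]; ring_nf

lemma listPot_replicate_zero_append (b z : ℕ) (l : List ℕ) :
    listPot d b (replicate z 0 ++ l) = listPot d (z + b) l := by
  induction z generalizing b with
  | zero => simp
  | succ z ih =>
    simp only [replicate_succ, cons_append, listPot_cons, keyPot_zero_key, ih]
    ring_nf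

@[simp] lemma listPot_replicate_zero (b z : ℕ) : listPot d b (replicate z 0) = 0 := by
  simpa using listPot_replicate_zero_append (d := d) b z []

lemma listPot_cons_le_orderedInsert (hd : 0 < d) (x : ℕ) {l : List ℕ}
    (hl : l.Pairwise (· ≤ ·)) (b : ℕ) :
    listPot d b (x :: l) ≤ listPot d b (l.orderedInsert (· ≤ ·) x) := by
  induction l generalizing b with
  | nil => rfl
  | cons y l ih =>
    by_cases hxy : x ≤ y
    · simp [orderedInsert, hxy]
    · have hexch := keyPot_exchange (d := d) hd (le_of_not_ge hxy) b
      have ih' := ih hl.of_cons (b + 1)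
      simp only [orderedInsert, hxy, if_false, listPot_cons] at ih' ⊢
      omega

lemma listPot_le_insertionSort (hd : 0 < d) (b : ℕ) (l : List ℕ) :
    listPot d b l ≤ listPot d b (l.insertionSort (· ≤ ·)) := by
  induction l generalizing b with
  | nil => rfl
  | cons x l ih =>
    calc listPot d b (x :: l) ≤ listPot d b (x :: l.insertionSort (· ≤ ·)) := by
          simpa using ih (b + 1)
      _ ≤ _ := listPot_cons_le_orderedInsert hd x (pairwise_insertionSort _ l) b

def multisetPot (d : ℕ) (M : Multiset ℕ) : ℕ := listPot d 0 (M.sort (· ≤ ·))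

lemma multisetPot_coe_of_pairwise {l : List ℕ} (hl : l.Pairwise (· ≤ ·)) :
    multisetPot d l = listPot d 0 l := by
  rw [multisetPot, Multiset.coe_sort, mergeSort_eq_self _ hl]

lemma listPot_le_multisetPot (hd : 0 < d) (l : List ℕ) : listPot d 0 l ≤ multisetPot d l := by
  rw [multisetPot, Multiset.coe_sort, mergeSort_eq_insertionSort]
  exact listPot_le_insertionSort hd 0 l

end Lists

section KeySteal

variable {d : ℕ}

/-- A steal step on trees, read on keys: the tree with key `u` is discarded and the tree with
key `K` splits into the remainder `K - 1` and the stolen subtree `stolenKey d K`. -/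
def KeySteal (d : ℕ) (M M' : Multiset ℕ) : Prop :=
  ∃ u K M₀, 1 ≤ K ∧ M = u ::ₘ K ::ₘ M₀ ∧ M' = (K - 1) ::ₘ stolenKey d K ::ₘ M₀

lemma listPot_steal_lt (hd : 0 < d) {K : ℕ} (hK : 1 ≤ K) (u b : ℕ) (p q r : List ℕ) :
    listPot d b (p ++ stolenKey d K :: (q ++ (K - 1) :: r)) <
      listPot d b (p ++ u :: (q ++ K :: r)) := by
  have hsteal := keyPot_steal hd hK (b + p.length + q.length)
  have hmono := keyPot_mono (d := d) (stolenKey d K) (Nat.le_add_right (b + p.length) q.length)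
  rw [show b + p.length + q.length + 1 = b + p.length + 1 + q.length by ring] at hsteal
  simp only [listPot_append, listPot_cons]
  omega

lemma multisetPot_lt_of_keySteal (hd : 0 < d) {M M' : Multiset ℕ} (h : KeySteal d M M') :
    multisetPot d M' < multisetPot d M := by
  obtain ⟨u, K, M₀, hK, rfl, rfl⟩ := h
  obtain ⟨p, q, r, hs, rfl⟩ := exists_split_of_pairwise (S := M₀) (Multiset.pairwise_sort _ _)
    (stolenKey_le d K) (Multiset.sort_eq _ _)
  calc multisetPot d ((K - 1) ::ₘ stolenKey d K ::ₘ (p ++ q ++ r : List ℕ))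
      = listPot d 0 (p ++ stolenKey d K :: (q ++ (K - 1) :: r)) := by rw [multisetPot, hs]
    _ < listPot d 0 (p ++ u :: (q ++ K :: r)) := listPot_steal_lt hd hK u 0 p q r
    _ ≤ multisetPot d (p ++ u :: (q ++ K :: r) : List ℕ) := listPot_le_multisetPot hd _
    _ = multisetPot d (u ::ₘ K ::ₘ (p ++ q ++ r : List ℕ)) := by
      rw [coe_append_cons, ← append_assoc, coe_append_cons]

/-- The greedy steal: an idle processor (the smallest key, whose budget is `0`) steals from the
smallest nonzero key among the others. -/
lemma exists_keySteal_of_pos (hd : 0 < d) {M : Multiset ℕ} (hM : 0 < multisetPot d M) :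
    ∃ M', KeySteal d M M' ∧ multisetPot d M ≤ multisetPot d M' + 1 := by
  have hsort := Multiset.sort_eq M (· ≤ ·)
  rw [multisetPot] at hM ⊢
  cases hs : M.sort (· ≤ ·) with
  | nil => simp [hs] at hM
  | cons u t =>
    obtain ⟨z, r, rfl, hr⟩ := exists_eq_replicate_append 0 t
    rw [hs] at hM hsort
    cases r with
    | nil => simp [keyPot_zero_budget] at hM
    | cons K r =>
      have hK : 1 ≤ K := Nat.one_le_iff_ne_zero.mpr (hr K rfl)
      refine ⟨(K - 1) ::ₘ stolenKey d K ::ₘ (replicate z 0 ++ r : List ℕ),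
        ⟨u, K, _, hK, by rw [← hsort, ← Multiset.cons_coe, coe_append_cons], rfl⟩, ?_⟩
      have hsteal := keyPot_steal hd hK z
      have hle := listPot_le_multisetPot hd (replicate z 0 ++ stolenKey d K :: (K - 1) :: r)
      rw [coe_append_cons, coe_append_cons, Multiset.cons_swap] at hle
      simp only [listPot_cons, listPot_replicate_zero_append, keyPot_zero_budget, add_zero,
        zero_add] at hle ⊢
      omega

end KeySteal

section Trees

variable {k : ℕ}

lemma rStealStep_replicate (U : RTree) (m H : ℕ) (S₀ : Multiset RTree) :
    RStealStep (U ::ₘ RTree.node (replicate (m + 2) (CKT k H)) ::ₘ S₀)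
      (ACT (m + 1) k H ::ₘ CKT k H ::ₘ S₀) := by
  refine ⟨U, CKT k H, replicate (m + 1) (CKT k H), S₀, by rw [← replicate_succ'], ?_⟩
  rcases m with _ | m
  · exact Or.inl ⟨CKT k H, rfl, by simp [ACT]⟩
  · exact Or.inr ⟨by simp, by simp [ACT]⟩

lemma eq_of_rStealStep_replicate {cs : List RTree} {c : RTree} {m H : ℕ}
    {S₀ S' : Multiset RTree} (hcs : cs ++ [c] = replicate (m + 2) (CKT k H))
    (hS' : (∃ a, cs = [a] ∧ S' = a ::ₘ c ::ₘ S₀) ∨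
      (2 ≤ cs.length ∧ S' = RTree.node cs ::ₘ c ::ₘ S₀)) :
    S' = ACT (m + 1) k H ::ₘ CKT k H ::ₘ S₀ := by
  rw [replicate_succ'] at hcs
  obtain ⟨rfl, hc⟩ := append_inj' hcs rfl
  obtain rfl : c = CKT k H := by simpa using hc
  rcases hS' with ⟨a, ha, rfl⟩ | ⟨hlen, rfl⟩
  · obtain ⟨rfl, rfl⟩ : CKT k H = a ∧ m = 0 := by simpa [replicate_succ] using ha
    simp [ACT]
  · have hm : m ≠ 0 := by simp at hlen; omega
    simp [ACT, hm]

def keyTree (k K : ℕ) : RTree := ACT (K % (k - 1) + 1) k (K / (k - 1))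

lemma keyTree_zero : keyTree k 0 = RTree.node [] := by
  simp [keyTree, ACT, CKT]

/-- Since `ACT k k h = CKT k (h + 1)`, the digit `r` may also be `k - 1`. -/
lemma keyTree_eq (hk : 2 ≤ k) {h r : ℕ} (hr : r ≤ k - 1) :
    keyTree k ((k - 1) * h + r) = ACT (r + 1) k h := by
  have hd : 0 < k - 1 := by omega
  rcases hr.lt_or_eq with hr | rfl
  · rw [keyTree, Nat.mul_add_div hd, Nat.div_eq_of_lt hr, Nat.mul_add_mod, Nat.mod_eq_of_lt hr,
      add_zero]
  · rw [keyTree, ← Nat.mul_succ, Nat.mul_div_cancel_left _ hd, Nat.mul_mod_right,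
      Nat.sub_add_cancel (by omega : 1 ≤ k)]
    simp [ACT, CKT, show k ≠ 1 by omega]

lemma keyTree_of_pos (hk : 2 ≤ k) {K : ℕ} (hK : 1 ≤ K) :
    keyTree k K = RTree.node (replicate ((K - 1) % (k - 1) + 2) (CKT k ((K - 1) / (k - 1)))) := by
  have hr : (K - 1) % (k - 1) + 1 ≤ k - 1 := Nat.mod_lt _ (by omega)
  have hK' : K = (k - 1) * ((K - 1) / (k - 1)) + ((K - 1) % (k - 1) + 1) := by
    have := Nat.div_add_mod (K - 1) (k - 1); omega
  conv_lhs => rw [hK', keyTree_eq hk hr]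
  simp [ACT]

lemma keyTree_stolenKey (hk : 2 ≤ k) (K : ℕ) :
    keyTree k (stolenKey (k - 1) K) = CKT k ((K - 1) / (k - 1)) := by
  rw [stolenKey, ← add_zero ((k - 1) * _), keyTree_eq hk (Nat.zero_le _)]
  simp [ACT]

lemma rStealStep_map_keyTree (hk : 2 ≤ k) {M M' : Multiset ℕ} (h : KeySteal (k - 1) M M') :
    RStealStep (M.map (keyTree k)) (M'.map (keyTree k)) := by
  obtain ⟨u, K, M₀, hK, rfl, rfl⟩ := h
  simp only [Multiset.map_cons, keyTree_of_pos hk hK, keyTree_stolenKey hk]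
  exact rStealStep_replicate _ _ _ _

lemma exists_keySteal_of_rStealStep (hk : 2 ≤ k) {M : Multiset ℕ} {S' : Multiset RTree}
    (h : RStealStep (M.map (keyTree k)) S') :
    ∃ M', KeySteal (k - 1) M M' ∧ S' = M'.map (keyTree k) := by
  classical
  obtain ⟨U, c, cs, S₀, hS, hS'⟩ := h
  obtain ⟨u, hu, -, hS⟩ := (Multiset.map_eq_cons _ _ _ _).mpr hS
  obtain ⟨K, hK, hKT, rfl⟩ := (Multiset.map_eq_cons _ _ _ _).mpr hS
  have hK1 : 1 ≤ K := by
    refine Nat.one_le_iff_ne_zero.mpr fun h0 => ?_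
    rw [h0, keyTree_zero, RTree.node.injEq] at hKT
    simp at hKT
  rw [keyTree_of_pos hk hK1, RTree.node.injEq] at hKT
  refine ⟨(K - 1) ::ₘ stolenKey (k - 1) K ::ₘ (M.erase u).erase K,
    ⟨u, K, _, hK1, by rw [Multiset.cons_erase hK, Multiset.cons_erase hu], rfl⟩, ?_⟩
  rw [eq_of_rStealStep_replicate hKT.symm hS', Multiset.map_cons, Multiset.map_cons,
    keyTree_stolenKey hk]
  rfl

lemma le_multisetPot_of_rStealSeq (hk : 2 ≤ k) {m : ℕ} {M : Multiset ℕ}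
    (h : RStealSeq m (M.map (keyTree k))) : m ≤ multisetPot (k - 1) M := by
  induction m generalizing M with
  | zero => exact Nat.zero_le _
  | succ m ih =>
    obtain ⟨S', hstep, hseq⟩ := h
    obtain ⟨M', hM', rfl⟩ := exists_keySteal_of_rStealStep hk hstep
    exact (ih hseq).trans_lt (multisetPot_lt_of_keySteal (by omega) hM')

lemma rStealSeq_of_le_multisetPot (hk : 2 ≤ k) {n : ℕ} {M : Multiset ℕ}
    (h : n ≤ multisetPot (k - 1) M) : RStealSeq n (M.map (keyTree k)) := by
  induction n generalizing M with
  | zero => trivial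
  | succ n ih =>
    obtain ⟨M', hM', hle⟩ := exists_keySteal_of_pos (d := k - 1) (M := M) (by omega) (by omega)
    exact ⟨_, rStealStep_map_keyTree hk hM', ih (by omega)⟩

lemma stealsR_map_keyTree (hk : 2 ≤ k) (M : Multiset ℕ) :
    stealsR (M.map (keyTree k)) = multisetPot (k - 1) M :=
  IsGreatest.csSup_eq ⟨rStealSeq_of_le_multisetPot hk le_rfl,
    fun _ hm => le_multisetPot_of_rStealSeq hk hm⟩

end Trees

end ActPotential

open ActPotential

theorem potential_ACT (k h b n : ℕ) (hk : 2 ≤ k) (hb1 : 1 ≤ b) (hb : b ≤ k - 1) :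
    PhiR (ACT b k h) n =
      (∑ i ∈ Finset.Icc 1 n, (k - 1) ^ i * Nat.choose h i) +
        (b - 1) * ∑ i ∈ Finset.range n, (k - 1) ^ i * Nat.choose h i := by
  set K := (k - 1) * h + (b - 1)
  have htree : keyTree k K = ACT b k h := by
    rw [keyTree_eq hk (by omega), Nat.sub_add_cancel hb1]
  have hcoe : ((List.replicate n 0 ++ [K] : List ℕ) : Multiset ℕ) =
      K ::ₘ Multiset.replicate n 0 := by
    rw [coe_append_cons, List.append_nil, Multiset.coe_replicate]
  have hsorted : (List.replicate n 0 ++ [K]).Pairwise (· ≤ ·) := by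
    simp [List.pairwise_append, List.pairwise_replicate]
  have hpot : multisetPot (k - 1) (K ::ₘ Multiset.replicate n 0) = keyPot (k - 1) K n := by
    rw [← hcoe, multisetPot_coe_of_pairwise hsorted, listPot_replicate_zero_append]
    simp
  have hmap : (K ::ₘ Multiset.replicate n 0).map (keyTree k) =
      ACT b k h ::ₘ Multiset.replicate n (RTree.node []) := by
    simp [htree, keyTree_zero]
  rw [PhiR, ← hmap, stealsR_map_keyTree hk, hpot, keyPot_eq (by omega) (by omega)]
  rfl
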